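/- Under Assumptions 1.1–1.4 and the overlap condition, for every a ∈ ℝ and d ∈ {0,1} with d' := 1 − d, the expectation of the efficient score at the true nuisance parameters recovers the potential-outcome c.d.f.: E[ ψ_{d,d',a} ] = P(Y(d, M(d')) ≤ a). -/

import Mathlib

/-!
Write `ψ = w₁ (1{Y ≤ a} - F(d,M,X)) + w₂ (F(d,M,X) - g(d',X)) + g(d',X)` with
`w₁ = 1{D = d} q_{d'} / (p_{d'} q_d)` and `w₂ = 1{D = d'} / p_{d'}`. As `w₁` is a bounded function
of `(D, M, X)` and `F(D,M,X) = P(Y ≤ a | D, M, X)`, the first term has mean zero, and inverse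
propensity weighting gives `E[w₂ g(d',X)] = E[g(d',X)]`; hence `E[ψ] = E[w₂ F(d,M,X)]`.

Split this expectation along the countably many values `m` of `M`. The identification step is
that `F(d,m,X) = P(Y(d,m) ≤ a | X)` a.s. on `{M = m}`: by consistency and Assumption 1.3 (with
Assumption 1.2 to drop `D` from the conditioning of `Y(d,m)`), both sides have the same integral
against `1{D = d, M = m} V` for every bounded function `V` of `(D, X)`, and the overlap
`P(D = d | M, X) ≥ ε₂` removes the restriction to `{D = d}`. The same two assumptions then turn
`E[w₂ 1{M = m} F(d,m,X)]` into `E[w₂ 1{Y(d,m) ≤ a, M(d') = m}] = P(Y(d,m) ≤ a, M(d') = m)`, and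
these sum to `P(Y(d, M(d')) ≤ a)`. Overlap also bounds the nuisance functions: `F(D,M,X)` and
`g(D,X)` lie in `[-1, 1]`, and so do `F(d,M,X)` and `g(d',X)`.
-/

open MeasureTheory ProbabilityTheory

local notation "σ(" f ")" => MeasurableSpace.comap f inferInstance

theorem ite_eq_indicator_preimage_singleton {α β : Type*} (f : α → β) (b : β) (x : α)
    [Decidable (f x = b)] :
    (if f x = b then (1 : ℝ) else 0) = (f ⁻¹' {b}).indicator (fun _ => 1) x := by
  by_cases hx : f x = b <;> simp [hx]

theorem ite_le_eq_indicator_preimage_Iic {α : Type*} (f : α → ℝ) (a : ℝ) (x : α)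
    [Decidable (f x ≤ a)] :
    (if f x ≤ a then (1 : ℝ) else 0) = (f ⁻¹' Set.Iic a).indicator (fun _ => 1) x := by
  by_cases hx : f x ≤ a <;> simp [hx]

theorem abs_indicator_one_le_one {α : Type*} (s : Set α) (x : α) :
    |s.indicator (fun _ => (1 : ℝ)) x| ≤ 1 := by
  by_cases hx : x ∈ s <;> simp [hx]

theorem abs_mul_indicator_one_le {α : Type*} (f : α → ℝ) (s : Set α) (x : α) :
    |f x * s.indicator (fun _ => 1) x| ≤ |f x| := by
  by_cases hx : x ∈ s <;> simp [hx]

theorem abs_indicator_one_div_le {α : Type*} {s : Set α} {x : α} {π ε : ℝ} (hε : 0 < ε)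
    (hπ : ε ≤ π) : |s.indicator (fun _ => 1) x / π| ≤ 1 / ε := by
  by_cases hx : x ∈ s
  · simpa [hx, abs_of_pos (hε.trans_le hπ)] using one_div_le_one_div_of_le hε hπ
  · simp [hx, hε.le]

theorem Real.measurable_sign : Measurable Real.sign :=
  Measurable.ite measurableSet_Iio measurable_const
    (Measurable.ite measurableSet_Ioi measurable_const measurable_const)

theorem Real.abs_sign_le_one (r : ℝ) : |Real.sign r| ≤ 1 := by
  rcases Real.sign_apply_eq r with h | h | h <;> simp [h]

theorem integral_eq_tsum_setIntegral_preimage_singleton {α κ : Type*} [MeasurableSpace α]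
    {μ : Measure α} [Countable κ] [MeasurableSpace κ] [MeasurableSingletonClass κ] {Z : α → κ}
    (hZ : Measurable Z) {f : α → ℝ} (hf : Integrable f μ) :
    ∫ x, f x ∂μ = ∑' k, ∫ x in Z ⁻¹' {k}, f x ∂μ := by
  rw [← integral_iUnion (fun k => hZ (measurableSet_singleton k)) (pairwise_disjoint_fiber Z)
    hf.integrableOn, ← Set.preimage_iUnion, Set.iUnion_of_singleton, Set.preimage_univ,
    setIntegral_univ]

section CondExp

variable {Ω : Type*} {m mΩ : MeasurableSpace Ω} {P : Measure Ω}

theorem ae_abs_condExp_indicator_le_one (s : Set Ω) : ∀ᵐ ω ∂P, |(P⟦s | m⟧) ω| ≤ 1 :=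
  ae_bdd_abs_condExp_of_ae_bdd_abs <| ae_of_all _ (abs_indicator_one_le_one s)

variable [IsFiniteMeasure P]

theorem integral_mul_eq_of_ae_eq_condExp (hm : m ≤ mΩ) {h f r : Ω → ℝ} {c : ℝ}
    (hh : StronglyMeasurable[m] h) (hbdd : ∀ᵐ ω ∂P, |h ω| ≤ c) (hf : Integrable f P)
    (hr : r =ᵐ[P] P[f|m]) :
    ∫ ω, h ω * f ω ∂P = ∫ ω, h ω * r ω ∂P :=
  calc ∫ ω, h ω * f ω ∂P = ∫ ω, P[h * f|m] ω ∂P := (integral_condExp hm).symm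
    _ = ∫ ω, h ω * r ω ∂P := integral_congr_ae <|
      (condExp_stronglyMeasurable_mul_of_bound hm hh hf c (by simpa using hbdd)).trans
        (Filter.EventuallyEq.rfl.mul hr.symm)

theorem integral_mul_sub_eq_zero_of_ae_eq_condExp (hm : m ≤ mΩ) {h f r : Ω → ℝ} {c : ℝ}
    (hh : StronglyMeasurable[m] h) (hbdd : ∀ᵐ ω ∂P, |h ω| ≤ c) (hf : Integrable f P)
    (hr : r =ᵐ[P] P[f|m]) :
    ∫ ω, h ω * (f ω - r ω) ∂P = 0 := by
  have hbdd' : ∀ᵐ ω ∂P, ‖h ω‖ ≤ c := by simpa using hbdd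
  have hh' : AEStronglyMeasurable h P := (hh.mono hm).aestronglyMeasurable
  simp_rw [mul_sub]
  rw [integral_sub (hf.bdd_mul hh' hbdd') ((integrable_condExp.congr hr.symm).bdd_mul hh' hbdd'),
    integral_mul_eq_of_ae_eq_condExp hm hh hbdd hf hr, sub_self]

theorem ae_of_ae_imp_of_le_condExp_indicator (hm : m ≤ mΩ) {A : Set Ω} (hA : MeasurableSet A)
    {ε : ℝ} (hε : 0 < ε) (hAε : ∀ᵐ ω ∂P, ε ≤ (P⟦A | m⟧) ω) {Q : Ω → Prop}
    (hQ : MeasurableSet[m] {ω | Q ω}) (h : ∀ᵐ ω ∂P, ω ∈ A → Q ω) : ∀ᵐ ω ∂P, Q ω := by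
  have hzero : ∫ ω in {ω | Q ω}ᶜ, (P⟦A | m⟧) ω ∂P = 0 := by
    rw [setIntegral_condExp hm ((integrable_const 1).indicator hA) hQ.compl]
    refine setIntegral_eq_zero_of_ae_eq_zero ?_
    filter_upwards [h] with ω hω hωQ
    exact Set.indicator_of_notMem (fun hωA => hωQ (hω hωA)) _
  have hpos : ∀ᵐ ω ∂P.restrict {ω | Q ω}ᶜ, 0 < (P⟦A | m⟧) ω :=
    ae_restrict_of_ae (hAε.mono fun ω hω => hε.trans_le hω)
  have hvanish := (setIntegral_eq_zero_iff_of_nonneg_ae (hpos.mono fun _ h => h.le)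
    integrable_condExp.integrableOn).mp hzero
  have hnull : P.restrict {ω | Q ω}ᶜ = 0 :=
    ae_eq_bot.mp <| Filter.eventually_false_iff_eq_bot.mp <|
      (hvanish.and hpos).mono fun _ h => h.2.ne' h.1
  rw [Measure.restrict_eq_zero, measure_eq_zero_iff_ae_notMem] at hnull
  simpa using hnull

theorem ae_abs_le_of_ae_eq_condExp_of_le_condExp_indicator {κ β : Type*} [MeasurableSpace κ]
    [MeasurableSingletonClass κ] [MeasurableSpace β] {D : Ω → κ} {Z : Ω → β} (hD : Measurable D)
    (hZ : Measurable Z) {G : κ → β → ℝ} {δ : κ} (hG : Measurable (G δ)) {ε : ℝ} (hε : 0 < ε)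
    (hDε : ∀ᵐ ω ∂P, ε ≤ (P⟦D ⁻¹' {δ} | σ(Z)⟧) ω) {m' : MeasurableSpace Ω} {f : Ω → ℝ}
    (hGf : (fun ω => G (D ω) (Z ω)) =ᵐ[P] P[f|m']) {R : ℝ} (hf : ∀ᵐ ω ∂P, |f ω| ≤ R) :
    ∀ᵐ ω ∂P, |G δ (Z ω)| ≤ R := by
  have hbdd : ∀ᵐ ω ∂P, |G (D ω) (Z ω)| ≤ R := by
    filter_upwards [hGf, ae_bdd_abs_condExp_of_ae_bdd_abs (m := m') hf] with ω h₁ h₂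
    exact h₁ ▸ h₂
  exact ae_of_ae_imp_of_le_condExp_indicator hZ.comap_le (hD (measurableSet_singleton δ)) hε hDε
    ⟨{z | |G δ z| ≤ R}, measurableSet_le hG.abs measurable_const, rfl⟩
    (hbdd.mono fun ω h hω => (show D ω = δ from hω) ▸ h)

theorem integral_indicator_div_mul_eq_integral (hm : m ≤ mΩ) {A : Set Ω} (hA : MeasurableSet A)
    {π h : Ω → ℝ} {ε c : ℝ} (hε : 0 < ε) (hπm : StronglyMeasurable[m] π)
    (hπ : π =ᵐ[P] P⟦A | m⟧) (hπε : ∀ᵐ ω ∂P, ε ≤ π ω) (hh : StronglyMeasurable[m] h)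
    (hbdd : ∀ᵐ ω ∂P, |h ω| ≤ c) :
    ∫ ω, A.indicator (fun _ => (1 : ℝ)) ω / π ω * h ω ∂P = ∫ ω, h ω ∂P := by
  have hbdd' : ∀ᵐ ω ∂P, |h ω / π ω| ≤ c / ε := by
    filter_upwards [hbdd, hπε] with ω hh hπ
    rw [abs_div, abs_of_pos (hε.trans_le hπ)]
    exact div_le_div₀ ((abs_nonneg _).trans hh) hh hε hπ
  calc ∫ ω, A.indicator (fun _ => (1 : ℝ)) ω / π ω * h ω ∂P
      = ∫ ω, h ω / π ω * A.indicator (fun _ => (1 : ℝ)) ω ∂P := by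
        congr 1; ext ω; ring
    _ = ∫ ω, h ω / π ω * π ω ∂P :=
        integral_mul_eq_of_ae_eq_condExp hm (hh.measurable.div hπm.measurable).stronglyMeasurable
          hbdd' ((integrable_const 1).indicator hA) hπ
    _ = ∫ ω, h ω ∂P := integral_congr_ae <|
        hπε.mono fun ω hω => div_mul_cancel₀ _ (hε.trans_le hω).ne'

end CondExp

section CondIndep

variable {Ω β γ : Type*} {m mΩ : MeasurableSpace Ω} [StandardBorelSpace Ω] {P : Measure Ω}
  [IsFiniteMeasure P] [MeasurableSpace β] [MeasurableSpace γ] {T : Ω → β} {S : Ω → γ}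

theorem integral_mul_indicator_inter_eq_of_condIndepFun (hm : m ≤ mΩ) (hT : Measurable T)
    (hS : Measurable S) (hTS : CondIndepFun m hm T S P) {B : Set β} {C : Set γ}
    (hB : MeasurableSet B) (hC : MeasurableSet C) {W : Ω → ℝ} {c : ℝ}
    (hW : StronglyMeasurable[m] W) (hbdd : ∀ᵐ ω ∂P, |W ω| ≤ c) :
    ∫ ω, W ω * (T ⁻¹' B ∩ S ⁻¹' C).indicator (fun _ => 1) ω ∂P
      = ∫ ω, W ω * (P⟦T ⁻¹' B | m⟧) ω * (S ⁻¹' C).indicator (fun _ => 1) ω ∂P := by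
  have hprod := (condIndepFun_iff_condExp_inter_preimage_eq_mul hT hS).mp hTS B C hB hC
  have hbdd' : ∀ᵐ ω ∂P, |W ω * (P⟦T ⁻¹' B | m⟧) ω| ≤ c * 1 := by
    filter_upwards [hbdd, ae_abs_condExp_indicator_le_one (T ⁻¹' B)] with ω hW hu
    rw [abs_mul]
    exact mul_le_mul hW hu (abs_nonneg _) ((abs_nonneg _).trans hW)
  calc ∫ ω, W ω * (T ⁻¹' B ∩ S ⁻¹' C).indicator (fun _ => 1) ω ∂P
      = ∫ ω, W ω * (P⟦T ⁻¹' B ∩ S ⁻¹' C | m⟧) ω ∂P :=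
        integral_mul_eq_of_ae_eq_condExp hm hW hbdd
          ((integrable_const 1).indicator ((hT hB).inter (hS hC))) .rfl
    _ = ∫ ω, W ω * (P⟦T ⁻¹' B | m⟧) ω * (P⟦S ⁻¹' C | m⟧) ω ∂P :=
        integral_congr_ae <| hprod.mono fun ω h => by simp only [h, mul_assoc]
    _ = _ := (integral_mul_eq_of_ae_eq_condExp hm (hW.mul stronglyMeasurable_condExp) hbdd'
          ((integrable_const 1).indicator (hS hC)) .rfl).symm

theorem integral_indicator_div_mul_indicator_eq_measureReal (hm : m ≤ mΩ) (hT : Measurable T)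
    (hS : Measurable S) (hTS : CondIndepFun m hm T S P) {B : Set β} {C : Set γ}
    (hB : MeasurableSet B) (hC : MeasurableSet C) {π : Ω → ℝ} {ε : ℝ} (hε : 0 < ε)
    (hπm : StronglyMeasurable[m] π) (hπ : π =ᵐ[P] P⟦S ⁻¹' C | m⟧) (hπε : ∀ᵐ ω ∂P, ε ≤ π ω) :
    ∫ ω, (S ⁻¹' C).indicator (fun _ => 1) ω / π ω * (T ⁻¹' B).indicator (fun _ => 1) ω ∂P
      = P.real (T ⁻¹' B) := by
  have hbdd : ∀ᵐ ω ∂P, |1 / π ω| ≤ 1 / ε := by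
    filter_upwards [hπε] with ω hω
    rw [abs_div, abs_one, abs_of_pos (hε.trans_le hω)]
    exact one_div_le_one_div_of_le hε hω
  calc ∫ ω, (S ⁻¹' C).indicator (fun _ => 1) ω / π ω * (T ⁻¹' B).indicator (fun _ => 1) ω ∂P
      = ∫ ω, 1 / π ω * (T ⁻¹' B ∩ S ⁻¹' C).indicator (fun _ => 1) ω ∂P := by
        congr 1; ext ω
        by_cases hTω : ω ∈ T ⁻¹' B <;> by_cases hSω : ω ∈ S ⁻¹' C <;> simp [hTω, hSω]
    _ = ∫ ω, 1 / π ω * (P⟦T ⁻¹' B | m⟧) ω * (S ⁻¹' C).indicator (fun _ => 1) ω ∂P :=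
        integral_mul_indicator_inter_eq_of_condIndepFun hm hT hS hTS hB hC
          (stronglyMeasurable_const.div hπm) hbdd
    _ = ∫ ω, (S ⁻¹' C).indicator (fun _ => 1) ω / π ω * (P⟦T ⁻¹' B | m⟧) ω ∂P := by
        congr 1; ext ω; ring
    _ = ∫ ω, (P⟦T ⁻¹' B | m⟧) ω ∂P :=
        integral_indicator_div_mul_eq_integral hm (hS hC) hε hπm hπ hπε
          stronglyMeasurable_condExp (ae_abs_condExp_indicator_le_one _)
    _ = P.real (T ⁻¹' B) := by
        rw [integral_condExp hm, integral_indicator_const _ (hT hB), smul_eq_mul, mul_one]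

theorem condExp_indicator_comap_prodMk_ae_eq_of_condIndepFun {κ 𝓧 : Type*} [MeasurableSpace κ]
    [Countable κ] [MeasurableSingletonClass κ] [MeasurableSpace 𝓧] {D : Ω → κ} {X : Ω → 𝓧}
    (hT : Measurable T) (hD : Measurable D) (hX : Measurable X)
    (hTD : CondIndepFun σ(X) hX.comap_le T D P) {B : Set β} (hB : MeasurableSet B) :
    P⟦T ⁻¹' B | σ(fun ω => (D ω, X ω))⟧ =ᵐ[P] P⟦T ⁻¹' B | σ(X)⟧ := by
  have hXDX : σ(X) ≤ σ(fun ω => (D ω, X ω)) :=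
    (measurable_snd.comp (comap_measurable fun ω => (D ω, X ω))).comap_le
  have hTB := (integrable_const (1 : ℝ)).indicator (hT hB) (μ := P)
  refine (ae_eq_condExp_of_forall_setIntegral_eq (hD.prodMk hX).comap_le hTB
    (fun _ _ _ => integrable_condExp.integrableOn) ?_
    (stronglyMeasurable_condExp.mono hXDX).aestronglyMeasurable).symm
  rintro _ ⟨E, hE, rfl⟩ -
  -- Split along the values of `D`: on `{D = δ}`, a `σ(D, X)`-measurable set is `σ(X)`-measurable.
  rw [integral_eq_tsum_setIntegral_preimage_singleton hD integrable_condExp.integrableOn,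
    integral_eq_tsum_setIntegral_preimage_singleton hD hTB.integrableOn]
  refine tsum_congr fun δ => ?_
  have hfiber : D ⁻¹' {δ} ∩ (fun ω => (D ω, X ω)) ⁻¹' E
      = X ⁻¹' (Prod.mk δ ⁻¹' E) ∩ D ⁻¹' {δ} := by
    ext ω
    simp only [Set.mem_inter_iff, Set.mem_preimage, Set.mem_singleton_iff]
    constructor <;> rintro ⟨h₁, h₂⟩
    · exact ⟨h₁ ▸ h₂, h₁⟩
    · exact ⟨h₂, h₂ ▸ h₁⟩
  have hEδ : MeasurableSet[σ(X)] (X ⁻¹' (Prod.mk δ ⁻¹' E)) :=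
    ⟨_, measurable_prodMk_left hE, rfl⟩
  have hfactor := integral_mul_indicator_inter_eq_of_condIndepFun hX.comap_le hT hD hTD hB
    (measurableSet_singleton δ) ((stronglyMeasurable_const (b := (1 : ℝ))).indicator hEδ)
    (c := 1) (ae_of_all _ fun ω => by
      by_cases h : ω ∈ X ⁻¹' (Prod.mk δ ⁻¹' E) <;> simp [h])
  rw [Measure.restrict_restrict (hD (measurableSet_singleton δ)), hfiber,
    ← integral_indicator ((hX.comap_le _ hEδ).inter (hD (measurableSet_singleton δ))),
    ← integral_indicator ((hX.comap_le _ hEδ).inter (hD (measurableSet_singleton δ)))]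
  convert hfactor.symm using 2 <;> ext ω <;>
    by_cases h₁ : ω ∈ X ⁻¹' (Prod.mk δ ⁻¹' E) <;> by_cases h₂ : ω ∈ D ⁻¹' {δ} <;>
    by_cases h₃ : ω ∈ T ⁻¹' B <;> simp_all

end CondIndep

section Score

variable {Ω κ 𝓜 𝓧 : Type*} {mΩ : MeasurableSpace Ω} {P : Measure Ω} [IsFiniteMeasure P]
  [MeasurableSpace κ] [MeasurableSingletonClass κ] [MeasurableSpace 𝓜] [MeasurableSpace 𝓧]
  {Y : Ω → ℝ} {D : Ω → κ} {M : Ω → 𝓜} {X : Ω → 𝓧}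

theorem integral_indicator_mul_sub_cdf_eq_zero (hY : Measurable Y) (hD : Measurable D)
    (hM : Measurable M) (hX : Measurable X) {d : κ} {a : ℝ} {F : κ → 𝓜 → 𝓧 → ℝ}
    (hF : (fun ω => F (D ω) (M ω) (X ω)) =ᵐ[P]
      P⟦Y ⁻¹' Set.Iic a | σ(fun ω => (D ω, M ω, X ω))⟧)
    {ρ : 𝓜 → 𝓧 → ℝ} (hρ : Measurable fun z : 𝓜 × 𝓧 => ρ z.1 z.2) {c : ℝ}
    (hρbdd : ∀ᵐ ω ∂P, |ρ (M ω) (X ω)| ≤ c) :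
    ∫ ω, (D ⁻¹' {d}).indicator (fun _ => 1) ω * ρ (M ω) (X ω) *
      ((Y ⁻¹' Set.Iic a).indicator (fun _ => 1) ω - F d (M ω) (X ω)) ∂P = 0 := by
  have hw : StronglyMeasurable[σ(fun ω => (D ω, M ω, X ω))]
      fun ω => (D ⁻¹' {d}).indicator (fun _ => (1 : ℝ)) ω * ρ (M ω) (X ω) :=
    ((((measurable_const.indicator (measurableSet_singleton d)).comp measurable_fst).mul
      (hρ.comp measurable_snd)).comp (comap_measurable _)).stronglyMeasurable
  rw [← integral_mul_sub_eq_zero_of_ae_eq_condExp (hD.prodMk (hM.prodMk hX)).comap_le hw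
    (hρbdd.mono fun ω h => by
      rw [mul_comm]; exact (abs_mul_indicator_one_le (fun ω => ρ (M ω) (X ω)) _ ω).trans h)
    ((integrable_const 1).indicator (hY measurableSet_Iic)) hF]
  congr 1; ext ω
  by_cases hd : D ω = d <;> simp [hd]

theorem integral_efficientScore_eq_integral_ipw (hY : Measurable Y) (hD : Measurable D)
    (hM : Measurable M) (hX : Measurable X) {d d' : κ} {a : ℝ} {F : κ → 𝓜 → 𝓧 → ℝ}
    (hFm : Measurable fun z : 𝓜 × 𝓧 => F d z.1 z.2)
    (hF : (fun ω => F (D ω) (M ω) (X ω)) =ᵐ[P]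
      P⟦Y ⁻¹' Set.Iic a | σ(fun ω => (D ω, M ω, X ω))⟧)
    (hFbdd : ∀ᵐ ω ∂P, |F d (M ω) (X ω)| ≤ 1) {π : 𝓧 → ℝ} (hπm : Measurable π)
    (hπ : (fun ω => π (X ω)) =ᵐ[P] P⟦D ⁻¹' {d'} | σ(X)⟧)
    {ε₁ : ℝ} (hε₁ : 0 < ε₁) (hπε : ∀ᵐ ω ∂P, ε₁ ≤ π (X ω))
    {q q' : 𝓜 → 𝓧 → ℝ} (hqm : Measurable fun z : 𝓜 × 𝓧 => q z.1 z.2)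
    (hq'm : Measurable fun z : 𝓜 × 𝓧 => q' z.1 z.2) {ε₂ : ℝ} (hε₂ : 0 < ε₂)
    (hqε : ∀ᵐ ω ∂P, ε₂ ≤ q (M ω) (X ω)) (hq'bdd : ∀ᵐ ω ∂P, |q' (M ω) (X ω)| ≤ 1)
    {g : 𝓧 → ℝ} (hgm : Measurable g) (hgbdd : ∀ᵐ ω ∂P, |g (X ω)| ≤ 1) :
    ∫ ω, ((D ⁻¹' {d}).indicator (fun _ => 1) ω * q' (M ω) (X ω) / (π (X ω) * q (M ω) (X ω))
          * ((Y ⁻¹' Set.Iic a).indicator (fun _ => 1) ω - F d (M ω) (X ω))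
        + (D ⁻¹' {d'}).indicator (fun _ => 1) ω / π (X ω) * (F d (M ω) (X ω) - g (X ω))
        + g (X ω)) ∂P
      = ∫ ω, (D ⁻¹' {d'}).indicator (fun _ => 1) ω / π (X ω) * F d (M ω) (X ω) ∂P := by
  set ρ : 𝓜 → 𝓧 → ℝ := fun m x => q' m x / (π x * q m x)
  set w : Ω → ℝ := fun ω => (D ⁻¹' {d'}).indicator (fun _ => 1) ω / π (X ω)
  have hρm : Measurable fun z : 𝓜 × 𝓧 => ρ z.1 z.2 :=
    hq'm.div ((hπm.comp measurable_snd).mul hqm)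
  have hρbdd : ∀ᵐ ω ∂P, |ρ (M ω) (X ω)| ≤ 1 / (ε₁ * ε₂) := by
    filter_upwards [hπε, hqε, hq'bdd] with ω hπω hqω hq'ω
    rw [abs_div, abs_of_pos (mul_pos (hε₁.trans_le hπω) (hε₂.trans_le hqω))]
    exact div_le_div₀ zero_le_one hq'ω (mul_pos hε₁ hε₂)
      (mul_le_mul hπω hqω hε₂.le (hε₁.le.trans hπω))
  have hw : AEStronglyMeasurable w P :=
    ((measurable_const.indicator (hD (measurableSet_singleton d'))).div
      (hπm.comp hX)).aestronglyMeasurable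
  have hwbdd : ∀ᵐ ω ∂P, ‖w ω‖ ≤ 1 / ε₁ := hπε.mono fun ω h => abs_indicator_one_div_le hε₁ h
  have hFint : Integrable (fun ω => F d (M ω) (X ω)) P :=
    .of_bound (hFm.comp (hM.prodMk hX)).aestronglyMeasurable 1 hFbdd
  have hgint : Integrable (fun ω => g (X ω)) P :=
    .of_bound (hgm.comp hX).aestronglyMeasurable 1 hgbdd
  have hresidual : Integrable (fun ω => (D ⁻¹' {d}).indicator (fun _ => 1) ω * ρ (M ω) (X ω) *
      ((Y ⁻¹' Set.Iic a).indicator (fun _ => 1) ω - F d (M ω) (X ω))) P := by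
    refine (((integrable_const 1).indicator (hY measurableSet_Iic)).sub hFint).bdd_mul
      ((measurable_const.indicator (hD (measurableSet_singleton d))).mul
        (hρm.comp (hM.prodMk hX))).aestronglyMeasurable
      (c := 1 / (ε₁ * ε₂)) (hρbdd.mono fun ω h => ?_)
    rw [Real.norm_eq_abs, mul_comm]
    exact (abs_mul_indicator_one_le (fun ω => ρ (M ω) (X ω)) _ ω).trans h
  -- Inverse propensity weighting cancels the `g`-terms in expectation, whatever bounded `g` is.
  have hipw : ∫ ω, w ω * g (X ω) ∂P = ∫ ω, g (X ω) ∂P :=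
    integral_indicator_div_mul_eq_integral hX.comap_le (hD (measurableSet_singleton d')) hε₁
      (hπm.comp (comap_measurable X)).stronglyMeasurable hπ hπε
      (hgm.comp (comap_measurable X)).stronglyMeasurable hgbdd
  calc _ = ∫ ω, (D ⁻¹' {d}).indicator (fun _ => 1) ω * ρ (M ω) (X ω) *
          ((Y ⁻¹' Set.Iic a).indicator (fun _ => 1) ω - F d (M ω) (X ω)) ∂P
        + (∫ ω, w ω * F d (M ω) (X ω) ∂P - ∫ ω, w ω * g (X ω) ∂P) + ∫ ω, g (X ω) ∂P := by
        rw [← integral_sub (hFint.bdd_mul hw hwbdd) (hgint.bdd_mul hw hwbdd),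
          ← integral_add hresidual, ← integral_add _ hgint]
        · congr 1; ext ω; simp only [ρ, w]; ring
        · exact (hresidual.add ((hFint.sub hgint).bdd_mul hw hwbdd)).congr
            (ae_of_all _ fun ω => by simp only [ρ, w, Pi.add_apply, Pi.sub_apply]; ring)
        · exact (hFint.bdd_mul hw hwbdd).sub (hgint.bdd_mul hw hwbdd)
    _ = _ := by
        rw [integral_indicator_mul_sub_cdf_eq_zero hY hD hM hX hF hρm hρbdd, hipw]
        ring

end Score

section Mediation

variable {Ω κ 𝓜 𝓧 : Type*} {mΩ : MeasurableSpace Ω} [StandardBorelSpace Ω] {P : Measure Ω}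
  [IsFiniteMeasure P] [MeasurableSpace κ] [Countable κ] [MeasurableSingletonClass κ]
  [MeasurableSpace 𝓜] [MeasurableSingletonClass 𝓜] [MeasurableSpace 𝓧]
  {Y : Ω → ℝ} {D : Ω → κ} {M : Ω → 𝓜} {X : Ω → 𝓧}

theorem integral_mul_cdf_eq_integral_mul_condExp_potentialOutcome
    (hY : Measurable Y) (hD : Measurable D) (hM : Measurable M) (hX : Measurable X)
    {d : κ} {m : 𝓜} {a : ℝ} {Yₚ : Ω → ℝ} {Mₚ : Ω → 𝓜} (hYₚ : Measurable Yₚ)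
    (hMₚ : Measurable Mₚ) (hcons_M : ∀ ω, D ω = d → Mₚ ω = M ω)
    (hcons_Y : ∀ ω, D ω = d → M ω = m → Yₚ ω = Y ω)
    (hYD : CondIndepFun σ(X) hX.comap_le Yₚ D P)
    (hYM : CondIndepFun σ(fun ω => (D ω, X ω)) (hD.prodMk hX).comap_le Yₚ Mₚ P)
    {F : κ → 𝓜 → 𝓧 → ℝ}
    (hF : (fun ω => F (D ω) (M ω) (X ω)) =ᵐ[P]
      P⟦Y ⁻¹' Set.Iic a | σ(fun ω => (D ω, M ω, X ω))⟧)
    {W : Ω → ℝ} {c : ℝ} (hW : StronglyMeasurable[σ(fun ω => (D ω, X ω))] W)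
    (hbdd : ∀ᵐ ω ∂P, |W ω| ≤ c) :
    ∫ ω, W ω * (D ⁻¹' {d} ∩ M ⁻¹' {m}).indicator (fun _ => 1) ω * F d m (X ω) ∂P
      = ∫ ω, W ω * (D ⁻¹' {d} ∩ M ⁻¹' {m}).indicator (fun _ => 1) ω *
          (P⟦Yₚ ⁻¹' Set.Iic a | σ(X)⟧) ω ∂P := by
  set A := D ⁻¹' {d} ∩ M ⁻¹' {m}
  have hDX_DMX : σ(fun ω => (D ω, X ω)) ≤ σ(fun ω => (D ω, M ω, X ω)) :=
    ((measurable_fst.prodMk (measurable_snd.comp measurable_snd)).comp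
      (comap_measurable fun ω => (D ω, M ω, X ω))).comap_le
  have hA : MeasurableSet[σ(fun ω => (D ω, M ω, X ω))] A :=
    ⟨{t | t.1 = d} ∩ {t | t.2.1 = m},
      (measurable_fst (measurableSet_singleton d)).inter
        ((measurable_fst.comp measurable_snd) (measurableSet_singleton m)), rfl⟩
  have hDd : MeasurableSet[σ(fun ω => (D ω, X ω))] (D ⁻¹' {d}) :=
    ⟨Prod.fst ⁻¹' {d}, measurable_fst (measurableSet_singleton d), rfl⟩
  calc ∫ ω, W ω * A.indicator (fun _ => 1) ω * F d m (X ω) ∂P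
      = ∫ ω, W ω * A.indicator (fun _ => 1) ω * F (D ω) (M ω) (X ω) ∂P := by
        congr 1; ext ω
        by_cases hω : ω ∈ A
        · rw [hω.1, hω.2]
        · simp [hω]
    _ = ∫ ω, W ω * A.indicator (fun _ => 1) ω *
          (Y ⁻¹' Set.Iic a).indicator (fun _ => 1) ω ∂P :=
        (integral_mul_eq_of_ae_eq_condExp (hD.prodMk (hM.prodMk hX)).comap_le
          ((hW.mono hDX_DMX).mul (stronglyMeasurable_const.indicator hA))
          (hbdd.mono fun ω h => (abs_mul_indicator_one_le W A ω).trans h)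
          ((integrable_const 1).indicator (hY measurableSet_Iic)) hF).symm
    _ = ∫ ω, W ω * (D ⁻¹' {d}).indicator (fun _ => 1) ω *
          (Yₚ ⁻¹' Set.Iic a ∩ Mₚ ⁻¹' {m}).indicator (fun _ => 1) ω ∂P := by
        classical
        congr 1; ext ω
        by_cases hd : D ω = d
        · by_cases hm : M ω = m
          · have hMₚ : Mₚ ω = m := (hcons_M ω hd).trans hm
            simp [A, Set.indicator_apply, hd, hm, hMₚ, hcons_Y ω hd hm]
          · have hMₚ : Mₚ ω ≠ m := (hcons_M ω hd).trans_ne hm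
            simp [A, hd, hm, hMₚ]
        · simp [A, hd]
    _ = ∫ ω, W ω * (D ⁻¹' {d}).indicator (fun _ => 1) ω *
          (P⟦Yₚ ⁻¹' Set.Iic a | σ(fun ω => (D ω, X ω))⟧) ω *
          (Mₚ ⁻¹' {m}).indicator (fun _ => 1) ω ∂P :=
        integral_mul_indicator_inter_eq_of_condIndepFun (hD.prodMk hX).comap_le hYₚ hMₚ hYM
          measurableSet_Iic (measurableSet_singleton m)
          (hW.mul (stronglyMeasurable_const.indicator hDd))
          (hbdd.mono fun ω h => (abs_mul_indicator_one_le W _ ω).trans h)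
    _ = ∫ ω, W ω * (D ⁻¹' {d}).indicator (fun _ => 1) ω * (P⟦Yₚ ⁻¹' Set.Iic a | σ(X)⟧) ω *
          (Mₚ ⁻¹' {m}).indicator (fun _ => 1) ω ∂P := by
        refine integral_congr_ae ?_
        filter_upwards [condExp_indicator_comap_prodMk_ae_eq_of_condIndepFun hYₚ hD hX hYD
          measurableSet_Iic] with ω hω
        rw [hω]
    _ = _ := by
        congr 1; ext ω
        by_cases hd : D ω = d
        · by_cases hm : M ω = m
          · simp [A, hd, hm, (hcons_M ω hd).trans hm]
          · simp [A, hd, hm, (hcons_M ω hd).trans_ne hm]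
        · simp [A, hd]

theorem ae_cdf_eq_condExp_potentialOutcome
    (hY : Measurable Y) (hD : Measurable D) (hM : Measurable M) (hX : Measurable X)
    {d : κ} {m : 𝓜} {a : ℝ} {Yₚ : Ω → ℝ} {Mₚ : Ω → 𝓜} (hYₚ : Measurable Yₚ)
    (hMₚ : Measurable Mₚ) (hcons_M : ∀ ω, D ω = d → Mₚ ω = M ω)
    (hcons_Y : ∀ ω, D ω = d → M ω = m → Yₚ ω = Y ω)
    (hYD : CondIndepFun σ(X) hX.comap_le Yₚ D P)
    (hYM : CondIndepFun σ(fun ω => (D ω, X ω)) (hD.prodMk hX).comap_le Yₚ Mₚ P)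
    {F : κ → 𝓜 → 𝓧 → ℝ} (hFm : Measurable (F d m))
    (hF : (fun ω => F (D ω) (M ω) (X ω)) =ᵐ[P]
      P⟦Y ⁻¹' Set.Iic a | σ(fun ω => (D ω, M ω, X ω))⟧)
    (hFbdd : ∀ᵐ ω ∂P, |F d (M ω) (X ω)| ≤ 1) {ε : ℝ} (hε : 0 < ε)
    (hDε : ∀ᵐ ω ∂P, ε ≤ (P⟦D ⁻¹' {d} | σ(fun ω => (M ω, X ω))⟧) ω) :
    ∀ᵐ ω ∂P, M ω = m → F d m (X ω) = (P⟦Yₚ ⁻¹' Set.Iic a | σ(X)⟧) ω := by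
  set u := P⟦Yₚ ⁻¹' Set.Iic a | σ(X)⟧
  set A := D ⁻¹' {d} ∩ M ⁻¹' {m}
  have hu : StronglyMeasurable[σ(X)] u := stronglyMeasurable_condExp
  have hFu : StronglyMeasurable[σ(X)] fun ω => F d m (X ω) - u ω :=
    (hFm.comp (comap_measurable X)).stronglyMeasurable.sub hu
  have hXDX : σ(X) ≤ σ(fun ω => (D ω, X ω)) :=
    (measurable_snd.comp (comap_measurable fun ω => (D ω, X ω))).comap_le
  have hXMX : σ(X) ≤ σ(fun ω => (M ω, X ω)) :=
    (measurable_snd.comp (comap_measurable fun ω => (M ω, X ω))).comap_le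
  -- Testing the identity below against `sign (F - u)` turns it into `∫_A |F - u| = 0`.
  have hmoment :
      ∫ ω, Real.sign (F d m (X ω) - u ω) * A.indicator (fun _ => 1) ω * F d m (X ω) ∂P
        = ∫ ω, Real.sign (F d m (X ω) - u ω) * A.indicator (fun _ => 1) ω * u ω ∂P :=
    integral_mul_cdf_eq_integral_mul_condExp_potentialOutcome hY hD hM hX hYₚ hMₚ hcons_M
      hcons_Y hYD hYM hF ((Real.measurable_sign.comp hFu.measurable).stronglyMeasurable.mono hXDX)
      (ae_of_all _ fun ω => Real.abs_sign_le_one _)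
  have hsign : Measurable fun ω => Real.sign (F d m (X ω) - u ω) :=
    Real.measurable_sign.comp (hFu.measurable.mono hX.comap_le le_rfl)
  have hA : MeasurableSet A :=
    (hD (measurableSet_singleton d)).inter (hM (measurableSet_singleton m))
  have hFint : Integrable (fun ω => Real.sign (F d m (X ω) - u ω) *
      A.indicator (fun _ => 1) ω * F d m (X ω)) P := by
    refine .of_bound (((hsign.mul (measurable_const.indicator hA)).mul
      (hFm.comp hX)).aestronglyMeasurable) 1 ?_
    filter_upwards [hFbdd] with ω hω
    by_cases hωA : ω ∈ A
    · rw [Set.indicator_of_mem hωA, mul_one, norm_mul, ← hωA.2]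
      exact mul_le_one₀ (Real.abs_sign_le_one _) (norm_nonneg _) hω
    · simp [hωA]
  have huint : Integrable (fun ω => Real.sign (F d m (X ω) - u ω) *
      A.indicator (fun _ => 1) ω * u ω) P := by
    refine .of_bound (((hsign.mul (measurable_const.indicator hA)).mul
      (hu.measurable.mono hX.comap_le le_rfl)).aestronglyMeasurable) 1 ?_
    filter_upwards [ae_abs_condExp_indicator_le_one (m := σ(X)) (Yₚ ⁻¹' Set.Iic a)] with ω hω
    rw [norm_mul, Real.norm_eq_abs]
    exact mul_le_one₀ ((abs_mul_indicator_one_le (fun ω => Real.sign (F d m (X ω) - u ω)) A ω).trans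
      (Real.abs_sign_le_one _)) (norm_nonneg _) hω
  have hvanish : (fun ω => A.indicator (fun _ => 1) ω *
      (Real.sign (F d m (X ω) - u ω) * (F d m (X ω) - u ω))) =ᵐ[P] 0 := by
    refine (integral_eq_zero_iff_of_nonneg_ae (ae_of_all _ fun ω => ?_)
      ((hFint.sub huint).congr (ae_of_all _ fun ω => by simp only [Pi.sub_apply]; ring))).mp ?_
    · exact mul_nonneg (Set.indicator_nonneg (fun _ _ => zero_le_one) _)
        (Real.sign_mul_nonneg _)
    · rw [← sub_eq_zero.mpr hmoment, ← integral_sub hFint huint]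
      congr 1; ext ω; ring
  refine ae_of_ae_imp_of_le_condExp_indicator (hM.prodMk hX).comap_le
    (hD (measurableSet_singleton d)) hε hDε ?_ ?_
  · exact MeasurableSet.imp
      ((measurable_fst.comp (comap_measurable _)) (measurableSet_singleton m))
      (StronglyMeasurable.measurableSet_eq_fun
        ((hFm.comp (comap_measurable X)).stronglyMeasurable.mono hXMX) (hu.mono hXMX))
  · filter_upwards [hvanish] with ω hω hd hm
    by_contra hne
    have hωA : ω ∈ A := ⟨hd, hm⟩
    simp only [Set.indicator_of_mem hωA, Pi.zero_apply, one_mul] at hω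
    exact (Real.sign_mul_pos_of_ne_zero _ (sub_ne_zero.mpr hne)).ne' hω

theorem setIntegral_indicator_div_mul_eq_measureReal
    (hD : Measurable D) (hM : Measurable M) (hX : Measurable X)
    {d' : κ} {m : 𝓜} {a : ℝ} {Yₚ : Ω → ℝ} {Mₚ : Ω → 𝓜} (hYₚ : Measurable Yₚ)
    (hMₚ : Measurable Mₚ) (hcons_M : ∀ ω, D ω = d' → Mₚ ω = M ω)
    (hYMD : CondIndepFun σ(X) hX.comap_le (fun ω => (Yₚ ω, Mₚ ω)) D P)
    (hYM : CondIndepFun σ(fun ω => (D ω, X ω)) (hD.prodMk hX).comap_le Yₚ Mₚ P)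
    {G : Ω → ℝ} (hG : ∀ᵐ ω ∂P, M ω = m → G ω = (P⟦Yₚ ⁻¹' Set.Iic a | σ(X)⟧) ω)
    {π : 𝓧 → ℝ} (hπm : Measurable π)
    (hπ : (fun ω => π (X ω)) =ᵐ[P] P⟦D ⁻¹' {d'} | σ(X)⟧)
    {ε : ℝ} (hε : 0 < ε) (hπε : ∀ᵐ ω ∂P, ε ≤ π (X ω)) :
    ∫ ω in M ⁻¹' {m}, (D ⁻¹' {d'}).indicator (fun _ => 1) ω / π (X ω) * G ω ∂P
      = P.real (Yₚ ⁻¹' Set.Iic a ∩ Mₚ ⁻¹' {m}) := by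
  set W := fun ω => (D ⁻¹' {d'}).indicator (fun _ => (1 : ℝ)) ω / π (X ω)
  have hW : StronglyMeasurable[σ(fun ω => (D ω, X ω))] W := by
    have hDd : MeasurableSet[σ(fun ω => (D ω, X ω))] (D ⁻¹' {d'}) :=
      ⟨Prod.fst ⁻¹' {d'}, measurable_fst (measurableSet_singleton d'), rfl⟩
    exact ((measurable_const.indicator hDd).div
      (hπm.comp (measurable_snd.comp (comap_measurable _)))).stronglyMeasurable
  have hWbdd : ∀ᵐ ω ∂P, |W ω| ≤ 1 / ε := hπε.mono fun ω hω => abs_indicator_one_div_le hε hω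
  have hYD : CondIndepFun σ(X) hX.comap_le Yₚ D P :=
    hYMD.comp measurable_fst measurable_id
  calc ∫ ω in M ⁻¹' {m}, W ω * G ω ∂P
      = ∫ ω, W ω * (P⟦Yₚ ⁻¹' Set.Iic a | σ(X)⟧) ω *
          (Mₚ ⁻¹' {m}).indicator (fun _ => 1) ω ∂P := by
        rw [← integral_indicator (hM (measurableSet_singleton m))]
        refine integral_congr_ae ?_
        filter_upwards [hG] with ω hω
        by_cases hd : D ω = d'
        · by_cases hm : M ω = m
          · simp [hm, hω hm, (hcons_M ω hd).trans hm]
          · simp [hm, (hcons_M ω hd).trans_ne hm]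
        · simp [W, hd]
    _ = ∫ ω, W ω * (P⟦Yₚ ⁻¹' Set.Iic a | σ(fun ω => (D ω, X ω))⟧) ω *
          (Mₚ ⁻¹' {m}).indicator (fun _ => 1) ω ∂P := by
        refine integral_congr_ae ?_
        filter_upwards [condExp_indicator_comap_prodMk_ae_eq_of_condIndepFun hYₚ hD hX hYD
          measurableSet_Iic] with ω hω
        rw [hω]
    _ = ∫ ω, W ω *
          ((fun ω => (Yₚ ω, Mₚ ω)) ⁻¹' (Set.Iic a ×ˢ {m})).indicator (fun _ => 1) ω ∂P := by
        rw [Set.mk_preimage_prod]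
        exact (integral_mul_indicator_inter_eq_of_condIndepFun (hD.prodMk hX).comap_le hYₚ hMₚ
          hYM measurableSet_Iic (measurableSet_singleton m) hW hWbdd).symm
    _ = P.real (Yₚ ⁻¹' Set.Iic a ∩ Mₚ ⁻¹' {m}) :=
        (integral_indicator_div_mul_indicator_eq_measureReal hX.comap_le (hYₚ.prodMk hMₚ) hD
          hYMD (measurableSet_Iic.prod (measurableSet_singleton m)) (measurableSet_singleton d')
          hε ((hπm.comp (comap_measurable X)).stronglyMeasurable) hπ hπε).trans
          (by rw [Set.mk_preimage_prod])

theorem integral_indicator_div_mul_cdf_eq_measureReal [Countable 𝓜]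
    (hD : Measurable D) (hM : Measurable M) (hX : Measurable X)
    {d' : κ} {a : ℝ} {Yₚ : 𝓜 → Ω → ℝ} {Mₚ : Ω → 𝓜} (hYₚ : ∀ m, Measurable (Yₚ m))
    (hMₚ : Measurable Mₚ) (hcons_M : ∀ ω, D ω = d' → Mₚ ω = M ω)
    (hYMD : ∀ m, CondIndepFun σ(X) hX.comap_le (fun ω => (Yₚ m ω, Mₚ ω)) D P)
    (hYM : ∀ m, CondIndepFun σ(fun ω => (D ω, X ω)) (hD.prodMk hX).comap_le (Yₚ m) Mₚ P)
    {G : 𝓜 → 𝓧 → ℝ} (hGm : Measurable fun t : 𝓜 × 𝓧 => G t.1 t.2)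
    (hGbdd : ∀ᵐ ω ∂P, |G (M ω) (X ω)| ≤ 1)
    (hG : ∀ m, ∀ᵐ ω ∂P, M ω = m → G m (X ω) = (P⟦Yₚ m ⁻¹' Set.Iic a | σ(X)⟧) ω)
    {π : 𝓧 → ℝ} (hπm : Measurable π)
    (hπ : (fun ω => π (X ω)) =ᵐ[P] P⟦D ⁻¹' {d'} | σ(X)⟧)
    {ε : ℝ} (hε : 0 < ε) (hπε : ∀ᵐ ω ∂P, ε ≤ π (X ω)) :
    ∫ ω, (D ⁻¹' {d'}).indicator (fun _ => 1) ω / π (X ω) * G (M ω) (X ω) ∂P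
      = P.real {ω | Yₚ (Mₚ ω) ω ≤ a} := by
  have hint : Integrable (fun ω => (D ⁻¹' {d'}).indicator (fun _ => 1) ω / π (X ω) *
      G (M ω) (X ω)) P := by
    refine .of_bound ((((measurable_const.indicator (hD (measurableSet_singleton d'))).div
      (hπm.comp hX)).mul (hGm.comp (hM.prodMk hX))).aestronglyMeasurable) (1 / ε) ?_
    filter_upwards [hπε, hGbdd] with ω hπω hG
    rw [Real.norm_eq_abs, abs_mul]
    exact mul_le_of_le_one_right (abs_nonneg _) hG |>.trans
      (abs_indicator_one_div_le hε hπω)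
  have hfibers : {ω | Yₚ (Mₚ ω) ω ≤ a} = ⋃ m, Yₚ m ⁻¹' Set.Iic a ∩ Mₚ ⁻¹' {m} := by
    ext ω
    simp
  rw [integral_eq_tsum_setIntegral_preimage_singleton hM hint, hfibers, measureReal_def,
    measure_iUnion ((pairwise_disjoint_fiber Mₚ).mono fun _ _ h =>
      h.mono Set.inter_subset_right Set.inter_subset_right)
      fun m => (hYₚ m measurableSet_Iic).inter (hMₚ (measurableSet_singleton m)),
    ENNReal.tsum_toReal_eq fun _ => measure_ne_top _ _]
  refine tsum_congr fun m => ?_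
  exact setIntegral_indicator_div_mul_eq_measureReal hD hM hX (hYₚ m) hMₚ hcons_M (hYMD m)
    (hYM m) ((hG m).mono fun ω h hm => hm ▸ h hm) hπm hπ hε hπε

end Mediation

theorem statement_1_general
    {Ω 𝓜 𝓧 : Type*} [MeasurableSpace Ω] [StandardBorelSpace Ω]
    [MeasurableSpace 𝓜] [Countable 𝓜] [MeasurableSingletonClass 𝓜] [MeasurableSpace 𝓧]
    (P : Measure Ω) [IsProbabilityMeasure P]
    (Y : Ω → ℝ) (D : Ω → ℕ) (M : Ω → 𝓜) (X : Ω → 𝓧)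
    (hY : Measurable Y) (hD : Measurable D) (hM : Measurable M) (hX : Measurable X)
    -- potential outcomes and potential mediators
    (Ypot : ℕ → 𝓜 → Ω → ℝ) (Mpot : ℕ → Ω → 𝓜)
    (hYpot : ∀ d m, Measurable (Ypot d m)) (hMpot : ∀ d, Measurable (Mpot d))
    -- Assumption 1.1 (consistency / SUTVA)
    (hcons_M : ∀ d ω, D ω = d → Mpot d ω = M ω)
    (hcons_Y : ∀ d m ω, D ω = d → M ω = m → Ypot d m ω = Y ω)
    -- Assumption 1.2 : (Y(d,m), M(d')) ⫫ D | X
    (hA2 : ∀ d ≤ 1, ∀ d' ≤ 1, ∀ m : 𝓜,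
      CondIndepFun (MeasurableSpace.comap X inferInstance) hX.comap_le
        (fun ω => (Ypot d m ω, Mpot d' ω)) D P)
    -- Assumption 1.3 : Y(d,m) ⫫ M(d') | (D, X)
    (hA3 : ∀ d ≤ 1, ∀ d' ≤ 1, ∀ m : 𝓜,
      CondIndepFun (MeasurableSpace.comap (fun ω => (D ω, X ω)) inferInstance)
        (hD.prodMk hX).comap_le (Ypot d m) (Mpot d') P)
    -- threshold and treatment indices
    (a : ℝ) (d d' : ℕ) (hd : d ≤ 1) (hd'def : d' = 1 - d)
    -- true nuisance parameters
    (p : ℕ → 𝓧 → ℝ) (q : ℕ → 𝓜 → 𝓧 → ℝ) (F : ℕ → 𝓜 → 𝓧 → ℝ) (g : ℕ → 𝓧 → ℝ)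
    (hpmeas : Measurable (fun t : ℕ × 𝓧 => p t.1 t.2))
    (hqmeas : Measurable (fun t : ℕ × 𝓜 × 𝓧 => q t.1 t.2.1 t.2.2))
    (hFmeas : Measurable (fun t : ℕ × 𝓜 × 𝓧 => F t.1 t.2.1 t.2.2))
    (hgmeas : Measurable (fun t : ℕ × 𝓧 => g t.1 t.2))
    -- p_δ(X) is a version of P(D = δ | X)
    (hpver : ∀ δ ≤ 1, (fun ω => p δ (X ω)) =ᵐ[P]
      P[(fun ω' => if D ω' = δ then (1:ℝ) else 0) | MeasurableSpace.comap X inferInstance])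
    -- q_δ(M,X) is a version of P(D = δ | M, X)
    (hqver : ∀ δ ≤ 1, (fun ω => q δ (M ω) (X ω)) =ᵐ[P]
      P[(fun ω' => if D ω' = δ then (1:ℝ) else 0) |
        MeasurableSpace.comap (fun ω' => (M ω', X ω')) inferInstance])
    -- F_a(D,M,X) is a version of P(Y ≤ a | D, M, X)
    (hFver : (fun ω => F (D ω) (M ω) (X ω)) =ᵐ[P]
      P[(fun ω' => if Y ω' ≤ a then (1:ℝ) else 0) |
        MeasurableSpace.comap (fun ω' => (D ω', M ω', X ω')) inferInstance])
    -- g_a(D,X) is a version of E[F_a(d, M, X) | D, X]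
    (hgver : (fun ω => g (D ω) (X ω)) =ᵐ[P]
      P[(fun ω' => F d (M ω') (X ω')) |
        MeasurableSpace.comap (fun ω' => (D ω', X ω')) inferInstance])
    -- overlap
    (ε₁ ε₂ : ℝ) (hε₁ : ε₁ ∈ Set.Ioo (0:ℝ) (1/2)) (hε₂ : ε₂ ∈ Set.Ioo (0:ℝ) (1/2))
    (hoverp : ∀ δ ≤ 1, ∀ᵐ ω ∂P, ε₁ ≤ p δ (X ω) ∧ p δ (X ω) ≤ 1 - ε₁)
    (hoverq : ∀ δ ≤ 1, ∀ᵐ ω ∂P, ε₂ ≤ q δ (M ω) (X ω) ∧ q δ (M ω) (X ω) ≤ 1 - ε₂) :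
    ∫ ω,
      ((if D ω = d then (1:ℝ) else 0) * q d' (M ω) (X ω)
          / (p d' (X ω) * q d (M ω) (X ω))
          * ((if Y ω ≤ a then (1:ℝ) else 0) - F d (M ω) (X ω))
        + (if D ω = d' then (1:ℝ) else 0) / p d' (X ω)
          * (F d (M ω) (X ω) - g d' (X ω))
        + g d' (X ω)) ∂P
      = (P {ω | Ypot d (Mpot d' ω) ω ≤ a}).toReal := by
  have hd' : d' ≤ 1 := by omega
  simp only [ite_eq_indicator_preimage_singleton, ite_le_eq_indicator_preimage_Iic]
    at hpver hqver hFver ⊢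
  have hpε : ∀ᵐ ω ∂P, ε₁ ≤ p d' (X ω) := (hoverp d' hd').mono fun _ h => h.1
  have hqε : ∀ᵐ ω ∂P, ε₂ ≤ (P⟦D ⁻¹' {d} | σ(fun ω => (M ω, X ω))⟧) ω :=
    (hoverq d hd).mp <| (hqver d hd).mono fun _ h₁ h₂ => h₁ ▸ h₂.1
  have hpm : Measurable (p d') := hpmeas.comp (measurable_const.prodMk measurable_id)
  have hqm : ∀ δ, Measurable fun z : 𝓜 × 𝓧 => q δ z.1 z.2 :=
    fun δ => hqmeas.comp (measurable_const.prodMk measurable_id)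
  have hFm : Measurable fun z : 𝓜 × 𝓧 => F d z.1 z.2 :=
    hFmeas.comp (measurable_const.prodMk measurable_id)
  have hFd : ∀ᵐ ω ∂P, |F d (M ω) (X ω)| ≤ 1 :=
    ae_abs_le_of_ae_eq_condExp_of_le_condExp_indicator (G := fun δ z => F δ z.1 z.2) hD
      (hM.prodMk hX) hFm hε₂.1 hqε hFver (ae_of_all _ (abs_indicator_one_le_one _))
  have hgd : ∀ᵐ ω ∂P, |g d' (X ω)| ≤ 1 :=
    ae_abs_le_of_ae_eq_condExp_of_le_condExp_indicator hD hX
      (hgmeas.comp (measurable_const.prodMk measurable_id)) hε₁.1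
      (hpε.mp <| (hpver d' hd').mono fun _ h₁ h₂ => h₁ ▸ h₂) hgver hFd
  refine (integral_efficientScore_eq_integral_ipw hY hD hM hX hFm hFver hFd hpm (hpver d' hd')
    hε₁.1 hpε (hqm d) (hqm d') hε₂.1 ((hoverq d hd).mono fun _ h => h.1)
    ((hoverq d' hd').mono fun _ h => abs_le.mpr
      ⟨by linarith [h.1, hε₂.1], by linarith [h.2, hε₂.1]⟩)
    (hgmeas.comp (measurable_const.prodMk measurable_id)) hgd).trans ?_
  exact integral_indicator_div_mul_cdf_eq_measureReal hD hM hX (hYpot d) (hMpot d') (hcons_M d')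
    (hA2 d hd d' hd') (hA3 d hd d' hd') hFm hFd (fun m =>
      ae_cdf_eq_condExp_potentialOutcome hY hD hM hX (hYpot d m) (hMpot d) (hcons_M d)
        (hcons_Y d m) ((hA2 d hd d' hd' m).comp measurable_fst measurable_id) (hA3 d hd d hd m)
        (hFm.comp (measurable_const.prodMk measurable_id)) hFver hFd hε₂.1 hqε)
    hpm (hpver d' hd') hε₁.1 hpε

/-- Under Assumptions 1.1–1.4 and the overlap condition, for every `a ∈ ℝ` and
`d ∈ {0,1}` with `d' := 1 − d`, the expectation of the efficient score at the true nuisance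
parameters recovers the potential-outcome c.d.f.: `E[ψ_{d,d',a}] = P(Y(d, M(d')) ≤ a)`. -/
theorem statement_1
    {Ω 𝓜 𝓧 : Type*} [MeasurableSpace Ω] [StandardBorelSpace Ω]
    [MeasurableSpace 𝓜] [Countable 𝓜] [MeasurableSingletonClass 𝓜] [MeasurableSpace 𝓧]
    (P : Measure Ω) [IsProbabilityMeasure P]
    (Y : Ω → ℝ) (D : Ω → ℕ) (M : Ω → 𝓜) (X : Ω → 𝓧)
    (hY : Measurable Y) (hD : Measurable D) (hM : Measurable M) (hX : Measurable X)
    (hD01 : ∀ ω, D ω ≤ 1)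
    -- potential outcomes and potential mediators
    (Ypot : ℕ → 𝓜 → Ω → ℝ) (Mpot : ℕ → Ω → 𝓜)
    (hYpot : ∀ d m, Measurable (Ypot d m)) (hMpot : ∀ d, Measurable (Mpot d))
    -- Assumption 1.1 (consistency / SUTVA)
    (hcons_M : ∀ d ω, D ω = d → Mpot d ω = M ω)
    (hcons_Y : ∀ d m ω, D ω = d → M ω = m → Ypot d m ω = Y ω)
    -- Assumption 1.2 : (Y(d,m), M(d')) ⫫ D | X
    (hA2 : ∀ d ≤ 1, ∀ d' ≤ 1, ∀ m : 𝓜,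
      CondIndepFun (MeasurableSpace.comap X inferInstance) hX.comap_le
        (fun ω => (Ypot d m ω, Mpot d' ω)) D P)
    -- Assumption 1.3 : Y(d,m) ⫫ M(d') | (D, X)
    (hA3 : ∀ d ≤ 1, ∀ d' ≤ 1, ∀ m : 𝓜,
      CondIndepFun (MeasurableSpace.comap (fun ω => (D ω, X ω)) inferInstance)
        (hD.prodMk hX).comap_le (Ypot d m) (Mpot d') P)
    -- Assumption 1.4 (common support) : P(D = d | M, X) > 0 a.s.
    (hA4 : ∀ d ≤ 1, ∀ᵐ ω ∂P,
      0 < (P[(fun ω' => if D ω' = d then (1:ℝ) else 0) |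
        MeasurableSpace.comap (fun ω' => (M ω', X ω')) inferInstance]) ω)
    -- threshold and treatment indices
    (a : ℝ) (d d' : ℕ) (hd : d ≤ 1) (hd'def : d' = 1 - d)
    -- true nuisance parameters
    (p : ℕ → 𝓧 → ℝ) (q : ℕ → 𝓜 → 𝓧 → ℝ) (F : ℕ → 𝓜 → 𝓧 → ℝ) (g : ℕ → 𝓧 → ℝ)
    (hpmeas : Measurable (fun t : ℕ × 𝓧 => p t.1 t.2))
    (hqmeas : Measurable (fun t : ℕ × 𝓜 × 𝓧 => q t.1 t.2.1 t.2.2))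
    (hFmeas : Measurable (fun t : ℕ × 𝓜 × 𝓧 => F t.1 t.2.1 t.2.2))
    (hgmeas : Measurable (fun t : ℕ × 𝓧 => g t.1 t.2))
    -- p_δ(X) is a version of P(D = δ | X)
    (hpver : ∀ δ ≤ 1, (fun ω => p δ (X ω)) =ᵐ[P]
      P[(fun ω' => if D ω' = δ then (1:ℝ) else 0) | MeasurableSpace.comap X inferInstance])
    -- q_δ(M,X) is a version of P(D = δ | M, X)
    (hqver : ∀ δ ≤ 1, (fun ω => q δ (M ω) (X ω)) =ᵐ[P]
      P[(fun ω' => if D ω' = δ then (1:ℝ) else 0) |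
        MeasurableSpace.comap (fun ω' => (M ω', X ω')) inferInstance])
    -- F_a(D,M,X) is a version of P(Y ≤ a | D, M, X)
    (hFver : (fun ω => F (D ω) (M ω) (X ω)) =ᵐ[P]
      P[(fun ω' => if Y ω' ≤ a then (1:ℝ) else 0) |
        MeasurableSpace.comap (fun ω' => (D ω', M ω', X ω')) inferInstance])
    -- g_a(D,X) is a version of E[F_a(d, M, X) | D, X]
    (hgver : (fun ω => g (D ω) (X ω)) =ᵐ[P]
      P[(fun ω' => F d (M ω') (X ω')) |
        MeasurableSpace.comap (fun ω' => (D ω', X ω')) inferInstance])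
    -- overlap
    (ε₁ ε₂ : ℝ) (hε₁ : ε₁ ∈ Set.Ioo (0:ℝ) (1/2)) (hε₂ : ε₂ ∈ Set.Ioo (0:ℝ) (1/2))
    (hoverp : ∀ δ ≤ 1, ∀ᵐ ω ∂P, ε₁ ≤ p δ (X ω) ∧ p δ (X ω) ≤ 1 - ε₁)
    (hoverq : ∀ δ ≤ 1, ∀ᵐ ω ∂P, ε₂ ≤ q δ (M ω) (X ω) ∧ q δ (M ω) (X ω) ≤ 1 - ε₂) :
    ∫ ω,
      ((if D ω = d then (1:ℝ) else 0) * q d' (M ω) (X ω)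
          / (p d' (X ω) * q d (M ω) (X ω))
          * ((if Y ω ≤ a then (1:ℝ) else 0) - F d (M ω) (X ω))
        + (if D ω = d' then (1:ℝ) else 0) / p d' (X ω)
          * (F d (M ω) (X ω) - g d' (X ω))
        + g d' (X ω)) ∂P
      = (P {ω | Ypot d (Mpot d' ω) ω ≤ a}).toReal :=
  statement_1_general P Y D M X hY hD hM hX Ypot Mpot hYpot hMpot hcons_M hcons_Y hA2 hA3 a d d' hd
    hd'def p q F g hpmeas hqmeas hFmeas hgmeas hpver hqver hFver hgver ε₁ ε₂ hε₁ hε₂ hoverp hoverq
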